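/- arXiv:1706.02115 — 3 statements merged into one kernel-verified Lean document; each statement's English description precedes it below -/
import Mathlib

section
/- Let Le > 0 with Le ≠ 1, Pr > 0, α > 0, σ_c = (π² + α²)³/α², and let R, R̃ satisfy R − R̃/Le = σ_c. If K = sign(1 − Le)·[ (Le²/(1−Le))(1 + 1/Pr)σ_c − R̃ ] > 0, then the dispersion cubic with n = 1, β³ + b₂β² + b₁β + b₀, has 0 as a simple root and its other two complex roots both have strictly negative real parts. -/
open Real Complex

/-- The constant coefficient `b₀` of the dispersion cubic. -/
noncomputable def dispB0 (Le Pr R Rt α2 : ℝ) (n : ℕ) : ℝ :=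
  ((n : ℝ) ^ 2 * Real.pi ^ 2 + α2) ^ 3 * Le * Pr - α2 * Pr * (Le * R - Rt)

/-- The linear coefficient `b₁` of the dispersion cubic. -/
noncomputable def dispB1 (Le Pr R Rt α2 : ℝ) (n : ℕ) : ℝ :=
  ((n : ℝ) ^ 2 * Real.pi ^ 2 + α2) ^ 2 * (Le + Pr + Le * Pr) -
    α2 * ((n : ℝ) ^ 2 * Real.pi ^ 2 + α2)⁻¹ * Pr * (R - Rt)

/-- The quadratic coefficient `b₂` of the dispersion cubic. -/
noncomputable def dispB2 (Le Pr α2 : ℝ) (n : ℕ) : ℝ :=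
  ((n : ℝ) ^ 2 * Real.pi ^ 2 + α2) * (1 + Le + Pr)

/-- The parameter `K` distinguishing steady from oscillatory convection. -/
noncomputable def Kparam (Le Pr Rt σc : ℝ) : ℝ :=
  Real.sign (1 - Le) * (Le ^ 2 / (1 - Le) * (1 + 1 / Pr) * σc - Rt)

/-!
At criticality `b₀` vanishes, so the cubic is `β (β² + b₂ β + b₁)`. A real quadratic with
`b₂, b₁ > 0` has both roots in the open left half-plane (Routh–Hurwitz), and `b₂ > 0` is clear,
while after multiplying by `Le (π² + α²)` and substituting `R = σ_c + R̃/Le`, the sign of `b₁`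
is that of `Le² (1 + 1/Pr) σ_c − (1 − Le) R̃ = |1 − Le| K`.
-/

theorem Complex.re_neg_of_sq_add_mul_add_eq_zero {b c : ℝ} (hb : 0 < b) (hc : 0 < c) {z : ℂ}
    (hz : z ^ 2 + b * z + c = 0) : z.re < 0 := by
  have hre := congrArg Complex.re hz
  have him := congrArg Complex.im hz
  simp only [sq, add_re, mul_re, ofReal_re, ofReal_im, add_im, mul_im, zero_re, zero_im,
    zero_mul, sub_zero, add_zero] at hre him
  -- The imaginary part is `(2 re z + b) im z`, so either `z` is real or `re z = -b / 2`.
  have him' : (2 * z.re + b) * z.im = 0 := by linarith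
  rcases mul_eq_zero.1 him' with h | h
  · linarith
  · rw [h] at hre
    nlinarith

theorem Complex.exists_sq_add_mul_add_eq_mul (b c : ℂ) :
    ∃ z₁ z₂ : ℂ, ∀ z, z ^ 2 + b * z + c = (z - z₁) * (z - z₂) := by
  obtain ⟨s, hs⟩ := IsAlgClosed.exists_eq_mul_self (b ^ 2 - 4 * c)
  exact ⟨(-b + s) / 2, (-b - s) / 2, fun z => by linear_combination (-1 / 4 : ℂ) * hs⟩

theorem Complex.exists_cubic_eq_mul_of_pos {b₂ b₁ : ℝ} (hb₂ : 0 < b₂) (hb₁ : 0 < b₁) :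
    ∃ z₁ z₂ : ℂ, z₁ ≠ 0 ∧ z₂ ≠ 0 ∧ z₁.re < 0 ∧ z₂.re < 0 ∧
      ∀ z : ℂ, z ^ 3 + (b₂ : ℂ) * z ^ 2 + (b₁ : ℂ) * z = z * (z - z₁) * (z - z₂) := by
  obtain ⟨z₁, z₂, hfac⟩ := exists_sq_add_mul_add_eq_mul (b₂ : ℂ) b₁
  have hre₁ : z₁.re < 0 := re_neg_of_sq_add_mul_add_eq_zero hb₂ hb₁ (by simp [hfac])
  have hre₂ : z₂.re < 0 := re_neg_of_sq_add_mul_add_eq_zero hb₂ hb₁ (by simp [hfac])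
  refine ⟨z₁, z₂, ne_of_apply_ne re hre₁.ne, ne_of_apply_ne re hre₂.ne, hre₁, hre₂, fun z => ?_⟩
  rw [mul_assoc, ← hfac]
  ring

section Criticality

variable {Le Pr R Rt α σc : ℝ}

theorem dispB0_eq_zero_of_crit (hLe : Le ≠ 0) (hα : α ≠ 0)
    (hσc : σc = (π ^ 2 + α ^ 2) ^ 3 / α ^ 2) (hcrit : R - Rt / Le = σc) :
    dispB0 Le Pr R Rt (α ^ 2) 1 = 0 := by
  rw [dispB0, show R = σc + Rt / Le by linarith, hσc]
  field_simp
  ring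

theorem dispB1_mul_eq_of_crit (hLe : Le ≠ 0) (hPr : Pr ≠ 0) (hα : α ≠ 0)
    (hσc : σc = (π ^ 2 + α ^ 2) ^ 3 / α ^ 2) (hcrit : R - Rt / Le = σc) :
    dispB1 Le Pr R Rt (α ^ 2) 1 * (Le * (π ^ 2 + α ^ 2)) =
      α ^ 2 * Pr * (Le ^ 2 * (1 + 1 / Pr) * σc - (1 - Le) * Rt) := by
  have hM : π ^ 2 + α ^ 2 ≠ 0 := by positivity
  rw [dispB1, show R = σc + Rt / Le by linarith, hσc]
  push_cast
  field_simp
  ring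

theorem one_sub_mul_lt_of_Kparam_pos (hLe1 : Le ≠ 1) (hK : 0 < Kparam Le Pr Rt σc) :
    (1 - Le) * Rt < Le ^ 2 * (1 + 1 / Pr) * σc := by
  have hx : 1 - Le ≠ 0 := sub_ne_zero.2 hLe1.symm
  have hsq : Real.sign (1 - Le) ^ 2 = 1 := by
    rcases Real.sign_apply_eq_of_ne_zero _ hx with h | h <;> simp [h]
  have hKx : Kparam Le Pr Rt σc * (Real.sign (1 - Le) * (1 - Le)) =
      Le ^ 2 * (1 + 1 / Pr) * σc - (1 - Le) * Rt := by
    rw [Kparam]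
    generalize 1 + 1 / Pr = p
    field_simp
    linear_combination (Le ^ 2 * p * σc - (1 - Le) * Rt) * hsq
  nlinarith [mul_pos hK (Real.sign_mul_pos_of_ne_zero _ hx)]

end Criticality

/-- At criticality `R − R̃/Le = σ_c = (π² + α²)³/α²`, if `K > 0` then the dispersion
cubic with `n = 1` has `0` as a simple root and its other two (complex) roots both have
strictly negative real parts. -/
theorem dispersion_roots_at_criticality (Le Pr R Rt α : ℝ) (hLe : 0 < Le) (hLe1 : Le ≠ 1)
    (hPr : 0 < Pr) (hα : 0 < α) (σc : ℝ) (hσc : σc = (Real.pi ^ 2 + α ^ 2) ^ 3 / α ^ 2)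
    (hcrit : R - Rt / Le = σc) (hK : 0 < Kparam Le Pr Rt σc) :
    ∃ z₁ z₂ : ℂ, z₁ ≠ 0 ∧ z₂ ≠ 0 ∧ z₁.re < 0 ∧ z₂.re < 0 ∧
      ∀ z : ℂ,
        z ^ 3 + (dispB2 Le Pr (α ^ 2) 1 : ℂ) * z ^ 2 + (dispB1 Le Pr R Rt (α ^ 2) 1 : ℂ) * z +
            (dispB0 Le Pr R Rt (α ^ 2) 1 : ℂ) =
          z * (z - z₁) * (z - z₂) := by
  have hb₂ : 0 < dispB2 Le Pr (α ^ 2) 1 := by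
    rw [dispB2]
    positivity
  have hb₁ : 0 < dispB1 Le Pr R Rt (α ^ 2) 1 := by
    have hprod : 0 < dispB1 Le Pr R Rt (α ^ 2) 1 * (Le * (π ^ 2 + α ^ 2)) := by
      rw [dispB1_mul_eq_of_crit hLe.ne' hPr.ne' hα.ne' hσc hcrit]
      exact mul_pos (by positivity) (sub_pos.2 (one_sub_mul_lt_of_Kparam_pos hLe1 hK))
    exact pos_of_mul_pos_left hprod (by positivity)
  obtain ⟨z₁, z₂, h₁, h₂, hre₁, hre₂, hfac⟩ := Complex.exists_cubic_eq_mul_of_pos hb₂ hb₁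
  refine ⟨z₁, z₂, h₁, h₂, hre₁, hre₂, fun z => ?_⟩
  rw [dispB0_eq_zero_of_crit hLe.ne' hα.ne' hσc hcrit, Complex.ofReal_zero, add_zero, hfac]
end

section
/- (Principle of exchange of stabilities, steady regime, subcritical part.) Let Le > 0 with Le ≠ 1, Pr > 0, r > 0 with r ≠ r_j for every positive integer j (where r_j² = ((1+j)/π²)( (j(2+j)²)^{1/3} + (j²(2+j))^{1/3} )), let σ_c = min over positive integers l of (π² + l(l+1)/r²)³/(l(l+1)/r²), and let R, R̃ be reals with σ = R − R̃/Le and K = sign(1 − Le)·[ (Le²/(1−Le))(1 + 1/Pr)σ_c − R̃ ] > 0. If σ < σ_c, then for every pair of positive integers (l, n), every complex root z of the dispersion cubic z³ + b₂z² + b₁z + b₀ (with α² = l(l+1)/r² and vertical wave number n) satisfies Re z < 0. -/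
open Real Complex

/-- The critical aspect ratios `r_j` with `r_j² = ((1+j)/π²)((j(2+j)²)^{1/3} + (j²(2+j))^{1/3})`. -/
noncomputable def rCrit (j : ℕ) : ℝ :=
  Real.sqrt (((1 + (j : ℝ)) / Real.pi ^ 2) *
    (((j : ℝ) * (2 + (j : ℝ)) ^ 2) ^ ((1 : ℝ) / 3) + ((j : ℝ) ^ 2 * (2 + (j : ℝ))) ^ ((1 : ℝ) / 3)))

private lemma cubic_re_im_aux (b0 b1 b2 : ℝ) (z : ℂ)
    (h : z ^ 3 + (b2 : ℂ) * z ^ 2 + (b1 : ℂ) * z + (b0 : ℂ) = 0) :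
    (z.re ^ 3 - 3 * z.re * z.im ^ 2 + b2 * (z.re ^ 2 - z.im ^ 2) + b1 * z.re + b0 = 0) ∧
    (3 * z.re ^ 2 * z.im - z.im ^ 3 + 2 * b2 * z.re * z.im + b1 * z.im = 0) := by
  have hre := congrArg Complex.re h
  have him := congrArg Complex.im h
  simp [Complex.add_re, Complex.add_im, Complex.mul_re, Complex.mul_im, pow_succ, pow_zero]
    at hre him
  constructor
  · linear_combination hre
  · linear_combination him

private lemma routh_cubic_aux (b0 b1 b2 : ℝ) (h0 : 0 < b0) (h2 : 0 < b2) (h21 : b0 < b2 * b1)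
    (z : ℂ) (h : z ^ 3 + (b2 : ℂ) * z ^ 2 + (b1 : ℂ) * z + (b0 : ℂ) = 0) : z.re < 0 := by
  have h1 : 0 < b1 := by nlinarith
  obtain ⟨hre, him⟩ := cubic_re_im_aux b0 b1 b2 z h
  set x := z.re with hx
  set y := z.im with hy
  by_contra hc
  push_neg at hc
  rcases eq_or_ne y 0 with h0y | h0y
  · rw [h0y] at hre
    nlinarith [mul_nonneg (mul_nonneg hc hc) hc, mul_nonneg hc hc]
  · have key : 3 * x ^ 2 - y ^ 2 + 2 * b2 * x + b1 = 0 := by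
      have hkey : y * (3 * x ^ 2 - y ^ 2 + 2 * b2 * x + b1) = 0 := by linear_combination him
      rcases mul_eq_zero.mp hkey with h' | h'
      · exact absurd h' h0y
      · exact h'
    have comb : 8 * x ^ 3 + 8 * b2 * x ^ 2 + 2 * (b1 + b2 ^ 2) * x + (b2 * b1 - b0) = 0 := by
      linear_combination (3 * x + b2) * key - hre
    nlinarith [mul_nonneg (mul_nonneg hc hc) hc, mul_nonneg hc hc,
      mul_nonneg h2.le (mul_nonneg hc hc), mul_nonneg h1.le hc,
      mul_nonneg (mul_nonneg h2.le h2.le) hc]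

set_option maxHeartbeats 1000000 in
/-- Principle of exchange of stabilities, steady regime, subcritical part: if `K > 0` and
`σ = R − R̃/Le < σ_c`, then for every pair of positive integers `(l, n)` every complex root
of the dispersion cubic (with `α² = l(l+1)/r²`) has strictly negative real part. -/
theorem pes_subcritical_stability (Le Pr r R Rt σc : ℝ) (hLe : 0 < Le) (hLe1 : Le ≠ 1)
    (hPr : 0 < Pr) (hr : 0 < r) (hrcrit : ∀ j : ℕ+, r ≠ rCrit j)
    (hσc : IsLeast {y : ℝ | ∃ l : ℕ+,
      y = (Real.pi ^ 2 + (l : ℝ) * ((l : ℝ) + 1) / r ^ 2) ^ 3 /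
        ((l : ℝ) * ((l : ℝ) + 1) / r ^ 2)} σc)
    (hK : 0 < Kparam Le Pr Rt σc) (hsub : R - Rt / Le < σc) :
    ∀ (l n : ℕ+) (z : ℂ),
      z ^ 3 + (dispB2 Le Pr ((l : ℝ) * ((l : ℝ) + 1) / r ^ 2) n : ℂ) * z ^ 2 +
          (dispB1 Le Pr R Rt ((l : ℝ) * ((l : ℝ) + 1) / r ^ 2) n : ℂ) * z +
          (dispB0 Le Pr R Rt ((l : ℝ) * ((l : ℝ) + 1) / r ^ 2) n : ℂ) = 0 →
        z.re < 0 := by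
  intro l n z hz
  have hlpos : (0:ℝ) < (l : ℝ) := by exact_mod_cast l.pos
  have hα2 : (0:ℝ) < (l : ℝ) * ((l : ℝ) + 1) / r ^ 2 := by positivity
  set α2 : ℝ := (l : ℝ) * ((l : ℝ) + 1) / r ^ 2 with hα2def
  set m : ℝ := (n : ℝ) ^ 2 * Real.pi ^ 2 + α2 with hmdef
  have hπ : (0:ℝ) < Real.pi := Real.pi_pos
  have hn1 : (1:ℝ) ≤ (n : ℝ) := by exact_mod_cast n.one_le
  have hm : 0 < m := by
    have h' : (0:ℝ) < (n:ℝ)^2 * Real.pi^2 := by positivity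
    linarith
  -- σc is positive
  have hσcpos : 0 < σc := by
    obtain ⟨l₀, h⟩ := hσc.1
    have hl₀ : (0:ℝ) < (l₀ : ℝ) := by exact_mod_cast l₀.pos
    rw [h]
    have ha : (0:ℝ) < (l₀ : ℝ) * ((l₀ : ℝ) + 1) / r ^ 2 := by positivity
    have hb : (0:ℝ) < (Real.pi ^ 2 + (l₀ : ℝ) * ((l₀ : ℝ) + 1) / r ^ 2) ^ 3 := by positivity
    exact div_pos hb ha
  -- key fact A : α2 * σc ≤ m ^ 3
  have hA : α2 * σc ≤ m ^ 3 := by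
    have hmem : (Real.pi ^ 2 + α2) ^ 3 / α2 ∈ {y : ℝ | ∃ l : ℕ+,
      y = (Real.pi ^ 2 + (l : ℝ) * ((l : ℝ) + 1) / r ^ 2) ^ 3 /
        ((l : ℝ) * ((l : ℝ) + 1) / r ^ 2)} := ⟨l, rfl⟩
    have h1 : σc ≤ (Real.pi ^ 2 + α2) ^ 3 / α2 := hσc.2 hmem
    have h2 : α2 * σc ≤ (Real.pi ^ 2 + α2) ^ 3 := by
      rw [mul_comm]; exact (le_div_iff₀ hα2).mp h1
    have h3 : (Real.pi ^ 2 + α2) ^ 3 ≤ m ^ 3 := by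
      apply pow_le_pow_left₀ (by positivity)
      have h4 : (1:ℝ) ≤ (n:ℝ)^2 := one_le_pow₀ hn1
      nlinarith [sq_nonneg Real.pi]
    linarith
  -- key fact B : Pr * (1 - Le) * Rt < Le ^ 2 * (Pr + 1) * σc
  have h1Le : (1:ℝ) - Le ≠ 0 := by
    intro h; apply hLe1; linarith
  have hB : Pr * (1 - Le) * Rt < Le ^ 2 * (Pr + 1) * σc := by
    have e1 : Le ^ 2 / (1 - Le) * (1 - Le) = Le ^ 2 := div_mul_cancel₀ _ h1Le
    have e2 : (1 + 1 / Pr) * Pr = Pr + 1 := by field_simp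
    have h4 : Le ^ 2 * (Pr + 1) * σc - Pr * (1 - Le) * Rt =
        (Le ^ 2 / (1 - Le) * (1 + 1 / Pr) * σc - Rt) * ((1 - Le) * Pr) := by
      linear_combination (-(1 + 1 / Pr) * Pr * σc) * e1 + (-(Le ^ 2) * σc) * e2
    rcases hLe1.lt_or_gt with hlt | hlt
    · have hs : 0 < 1 - Le := by linarith
      rw [Kparam, Real.sign_of_pos hs, one_mul] at hK
      nlinarith [mul_pos hK (mul_pos hs hPr)]
    · have hs : 1 - Le < 0 := by linarith
      rw [Kparam, Real.sign_of_neg hs] at hK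
      have hK' : Le ^ 2 / (1 - Le) * (1 + 1 / Pr) * σc - Rt < 0 := by nlinarith
      have hneg : (1 - Le) * Pr < 0 := mul_neg_of_neg_of_pos hs hPr
      nlinarith [mul_pos_of_neg_of_neg hK' hneg]
  -- key fact C : Le * R - Rt < Le * σc
  have hC : Le * R - Rt < Le * σc := by
    have h4 : Le * (σc - (R - Rt / Le)) = Le * σc - (Le * R - Rt) := by
      field_simp
    nlinarith [mul_pos hLe (sub_pos.mpr hsub)]
  clear_value m α2
  -- positivity of the coefficients / Routh–Hurwitz conditions
  have hb2 : 0 < dispB2 Le Pr α2 n := by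
    rw [dispB2, ← hmdef]
    positivity
  have hb0 : 0 < dispB0 Le Pr R Rt α2 n := by
    rw [dispB0, ← hmdef]
    nlinarith [mul_lt_mul_of_pos_left hC (mul_pos hα2 hPr),
      mul_le_mul_of_nonneg_left hA (mul_pos hLe hPr).le]
  have hb21 : dispB0 Le Pr R Rt α2 n < dispB2 Le Pr α2 n * dispB1 Le Pr R Rt α2 n := by
    have hfact : dispB2 Le Pr α2 n * dispB1 Le Pr R Rt α2 n - dispB0 Le Pr R Rt α2 n =
        m ^ 3 * (Le + Pr) * (1 + Le) * (1 + Pr) -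
          α2 * Pr * (R * (1 + Pr) - Rt * (Le + Pr)) := by
      rw [dispB0, dispB1, dispB2, ← hmdef]
      field_simp
      ring
    have t1 : 0 ≤ (m ^ 3 - α2 * σc) * (Le * (1 + Pr) * (Le + Pr) * (1 + Le)) := by
      apply mul_nonneg (by linarith) (by positivity)
    have t2 : 0 < (Le ^ 2 * (Pr + 1) * σc - Pr * (1 - Le) * Rt) * (α2 * (1 + Le + Pr)) := by
      apply mul_pos (by linarith) (by positivity)
    have t3 : 0 < (Le * σc - (Le * R - Rt)) * (α2 * Pr * (1 + Pr)) := by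
      apply mul_pos (by linarith) (by positivity)
    have hmain : 0 < Le * (m ^ 3 * (Le + Pr) * (1 + Le) * (1 + Pr) -
        α2 * Pr * (R * (1 + Pr) - Rt * (Le + Pr))) := by linarith [t1, t2, t3]
    have hpos : 0 < m ^ 3 * (Le + Pr) * (1 + Le) * (1 + Pr) -
        α2 * Pr * (R * (1 + Pr) - Rt * (Le + Pr)) := by
      by_contra hcon
      push_neg at hcon
      nlinarith [mul_nonpos_of_nonneg_of_nonpos hLe.le hcon]
    linarith [hfact]
  exact routh_cubic_aux _ _ _ hb0 hb2 hb21 z hz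
end

section
/- (Principle of exchange of stabilities, oscillatory regime, critical part.) Let Le > 0 with Le ≠ 1, Pr > 0, r > 0 with r ≠ r_j for every positive integer j, let l_c be the unique minimizer of l ↦ (π² + l(l+1)/r²)³/(l(l+1)/r²) over positive integers and σ_c the corresponding minimum. Let R, R̃ be reals with η = R − ((Pr + Le)/(Pr + 1))·R̃ and K = sign(1 − Le)·[ (Le²/(1−Le))(1 + 1/Pr)σ_c − R̃ ] < 0. If η = η_c := ((Pr + Le)(1 + Le)/Pr)·σ_c, then the dispersion cubic with α² = l_c(l_c+1)/r² and n = 1 has a pair of nonzero purely imaginary complex-conjugate roots and one real root which is strictly negative. -/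
open Real Complex

/-- Principle of exchange of stabilities, oscillatory regime, critical part: with `K < 0` and
`η = R − ((Pr+Le)/(Pr+1))·R̃` equal to the critical value `η_c = ((Pr+Le)(1+Le)/Pr)·σ_c`,
the dispersion cubic with `α² = l_c(l_c+1)/r²` and `n = 1` has a pair of nonzero purely
imaginary complex-conjugate roots `±iω` and a strictly negative real root. -/
theorem pes_oscillatory_critical (Le Pr r R Rt σc : ℝ) (lc : ℕ+) (hLe : 0 < Le)
    (hLe1 : Le ≠ 1) (hPr : 0 < Pr) (hr : 0 < r) (hrcrit : ∀ j : ℕ+, r ≠ rCrit j)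
    (hlc : ∀ l : ℕ+, l ≠ lc →
      (Real.pi ^ 2 + (lc : ℝ) * ((lc : ℝ) + 1) / r ^ 2) ^ 3 /
          ((lc : ℝ) * ((lc : ℝ) + 1) / r ^ 2) <
        (Real.pi ^ 2 + (l : ℝ) * ((l : ℝ) + 1) / r ^ 2) ^ 3 /
          ((l : ℝ) * ((l : ℝ) + 1) / r ^ 2))
    (hσc : σc = (Real.pi ^ 2 + (lc : ℝ) * ((lc : ℝ) + 1) / r ^ 2) ^ 3 /
      ((lc : ℝ) * ((lc : ℝ) + 1) / r ^ 2))
    (hK : Kparam Le Pr Rt σc < 0)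
    (hη : R - ((Pr + Le) / (Pr + 1)) * Rt = ((Pr + Le) * (1 + Le) / Pr) * σc) :
    ∃ ω β : ℝ, ω ≠ 0 ∧ β < 0 ∧
      ∀ z : ℂ,
        z ^ 3 + (dispB2 Le Pr ((lc : ℝ) * ((lc : ℝ) + 1) / r ^ 2) 1 : ℂ) * z ^ 2 +
            (dispB1 Le Pr R Rt ((lc : ℝ) * ((lc : ℝ) + 1) / r ^ 2) 1 : ℂ) * z +
            (dispB0 Le Pr R Rt ((lc : ℝ) * ((lc : ℝ) + 1) / r ^ 2) 1 : ℂ) =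
          (z - (ω : ℂ) * Complex.I) * (z + (ω : ℂ) * Complex.I) * (z - (β : ℂ)) := by

  set α2 : ℝ := (lc : ℝ) * ((lc : ℝ) + 1) / r ^ 2 with hα2def
  have hlcpos : (0 : ℝ) < (lc : ℝ) := by exact_mod_cast lc.pos
  have hα2 : 0 < α2 := by
    rw [hα2def]; positivity
  set m : ℝ := Real.pi ^ 2 + α2 with hmdef
  have hm : 0 < m := by
    have := Real.pi_pos
    rw [hmdef]; positivity
  have hσ : σc = m ^ 3 / α2 := by rw [hσc]
  have hPr1 : (0 : ℝ) < Pr + 1 := by linarith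
  have hR : R = ((Pr + Le) / (Pr + 1)) * Rt + ((Pr + Le) * (1 + Le) / Pr) * σc := by
    linarith
  have hb2 : dispB2 Le Pr α2 1 = m * (1 + Le + Pr) := by
    simp [dispB2, hmdef]
  have hb1 : dispB1 Le Pr R Rt α2 1 =
      α2 * Pr * (1 - Le) * Rt / (m * (Pr + 1)) - m ^ 2 * Le ^ 2 := by
    rw [dispB1, hR, hσ]
    have h1 : ((1 : ℕ) : ℝ) ^ 2 * Real.pi ^ 2 + α2 = m := by
      simp [hmdef]
    rw [h1]
    field_simp
    ring
  have hb0 : dispB0 Le Pr R Rt α2 1 = dispB1 Le Pr R Rt α2 1 * dispB2 Le Pr α2 1 := by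
    rw [hb1, hb2, dispB0, hR, hσ]
    have h1 : ((1 : ℕ) : ℝ) ^ 2 * Real.pi ^ 2 + α2 = m := by
      simp [hmdef]
    rw [h1]
    field_simp
    ring
  have hb1pos : 0 < dispB1 Le Pr R Rt α2 1 := by
    have hne : (1:ℝ) - Le ≠ 0 := sub_ne_zero.mpr (Ne.symm hLe1)
    have hfact : Le ^ 2 / (1 - Le) * (1 + 1 / Pr) * (m ^ 3 / α2) * (α2 * Pr * (1 - Le)) =
        m ^ 2 * Le ^ 2 * (m * (Pr + 1)) := by
      field_simp
    rw [Kparam, hσ] at hK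
    have key : m ^ 2 * Le ^ 2 * (m * (Pr + 1)) < α2 * Pr * (1 - Le) * Rt := by
      rcases lt_or_gt_of_ne hLe1 with h | h
      · rw [Real.sign_of_pos (by linarith : (0:ℝ) < 1 - Le)] at hK
        have hK' : Le ^ 2 / (1 - Le) * (1 + 1 / Pr) * (m ^ 3 / α2) < Rt := by linarith
        have hc : (0:ℝ) < α2 * Pr * (1 - Le) := by
          have : (0:ℝ) < 1 - Le := by linarith
          positivity
        have := mul_lt_mul_of_pos_right hK' hc
        rw [hfact] at this
        linarith [mul_comm Rt (α2 * Pr * (1 - Le)), this]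
      · rw [Real.sign_of_neg (by linarith : (1:ℝ) - Le < 0)] at hK
        have hK' : Rt < Le ^ 2 / (1 - Le) * (1 + 1 / Pr) * (m ^ 3 / α2) := by linarith
        have hc : α2 * Pr * (1 - Le) < 0 :=
          mul_neg_of_pos_of_neg (by positivity) (by linarith)
        have := mul_lt_mul_of_neg_right hK' hc
        rw [hfact] at this
        linarith [mul_comm Rt (α2 * Pr * (1 - Le)), this]
    rw [hb1, sub_pos, lt_div_iff₀ (by positivity : (0:ℝ) < m * (Pr + 1))]
    exact key
  have hb2pos : 0 < dispB2 Le Pr α2 1 := by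
    rw [hb2]; positivity
  refine ⟨Real.sqrt (dispB1 Le Pr R Rt α2 1), -(dispB2 Le Pr α2 1), ?_, by linarith, ?_⟩
  · exact ne_of_gt (Real.sqrt_pos.mpr hb1pos)
  · intro z
    have hω2 : ((Real.sqrt (dispB1 Le Pr R Rt α2 1) : ℝ) : ℂ) ^ 2 =
        ((dispB1 Le Pr R Rt α2 1 : ℝ) : ℂ) := by
      rw [← Complex.ofReal_pow, Real.sq_sqrt hb1pos.le]
    have hb0c : ((dispB0 Le Pr R Rt α2 1 : ℝ) : ℂ) =
        ((dispB1 Le Pr R Rt α2 1 : ℝ) : ℂ) * ((dispB2 Le Pr α2 1 : ℝ) : ℂ) := by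
      rw [← Complex.ofReal_mul, hb0]
    push_cast
    linear_combination ((z + ((dispB2 Le Pr α2 1 : ℝ) : ℂ)) *
        ((Real.sqrt (dispB1 Le Pr R Rt α2 1) : ℝ) : ℂ) ^ 2) * Complex.I_sq -
      (z + ((dispB2 Le Pr α2 1 : ℝ) : ℂ)) * hω2 + hb0c
end
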